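/- Let T be a tree (a connected acyclic finite simple graph), let M be a maximum matching of T, and let uv be an edge of T such that u is not covered by any edge of M. Then the contraction T/uv is a tree with μ(T/uv) = μ(T) and α(T/uv) = α(T) − 1. -/

import Mathlib

open SimpleGraph

universe u
variable {V : Type*} {W : Type*}

/-- `H` is isomorphic to an induced subgraph of `G`. -/
def SimpleGraph.IsIndSubgraph {W V : Type*} (H : SimpleGraph W) (G : SimpleGraph V) : Prop :=
  ∃ f : W ↪ V, ∀ a b, G.Adj (f a) (f b) ↔ H.Adj a b

/-- A set of pairwise non-adjacent vertices. -/
def SimpleGraph.IsIndepSet' (G : SimpleGraph V) (s : Set V) : Prop :=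
  s.Pairwise fun a b => ¬ G.Adj a b

/-- The independence number of `G`. -/
noncomputable def SimpleGraph.indepNum' (G : SimpleGraph V) : ℕ :=
  sSup {n | ∃ s : Set V, G.IsIndepSet' s ∧ s.ncard = n}

/-- A matching, viewed as a set of pairwise disjoint edges of `G`. -/
def SimpleGraph.IsMatchingSet (G : SimpleGraph V) (M : Set (Sym2 V)) : Prop :=
  M ⊆ G.edgeSet ∧ M.Pairwise fun e f => ∀ x, x ∈ e → x ∉ f

/-- The matching number of `G`. -/
noncomputable def SimpleGraph.matchingNum (G : SimpleGraph V) : ℕ :=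
  sSup {n | ∃ M : Set (Sym2 V), G.IsMatchingSet M ∧ M.ncard = n}

/-- A vertex cover. -/
def SimpleGraph.IsVertexCover' (G : SimpleGraph V) (C : Set V) : Prop :=
  ∀ u v, G.Adj u v → u ∈ C ∨ v ∈ C

/-- Contraction of the edge `uv`, identifying the new vertex with `v`. -/
def SimpleGraph.contractEdge (G : SimpleGraph V) (u v : V) : SimpleGraph {x : V // x ≠ u} where
  Adj x y := x ≠ y ∧ (G.Adj x y ∨ (x.1 = v ∧ G.Adj u y) ∨ (y.1 = v ∧ G.Adj u x))
  symm := ⟨by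
    rintro x y ⟨hne, h⟩
    refine ⟨hne.symm, ?_⟩
    rcases h with h | h | h
    · exact Or.inl h.symm
    · exact Or.inr (Or.inr h)
    · exact Or.inr (Or.inl h)⟩
  loopless := ⟨fun x h => h.1 rfl⟩

/-- A maximal clique. -/
def SimpleGraph.IsMaxlClique (G : SimpleGraph V) (K : Set V) : Prop :=
  G.IsClique K ∧ ∀ K' : Set V, G.IsClique K' → K ⊆ K' → K' = K

/-!
In every graph `α + μ ≤ n`: each edge of a matching has an endpoint outside a given independent
set, and these endpoints are distinct. In a forest equality holds: remove a leaf together with its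
neighbour and extend an optimal pair for the rest by the leaf and by the pendant edge.

Contracting an edge of a tree on `n` vertices gives a connected graph on `n - 1` vertices with at
most `n - 2` edges, hence a tree. As `u` is unsaturated, `M` survives the contraction, so
`μ(T) ≤ μ(T/uv)`; an independent set of `T` meets `{u, v}` at most once, so
`α(T) ≤ α(T/uv) + 1`.
Hence `n ≤ α(T) + μ(T) ≤ α(T/uv) + μ(T/uv) + 1 ≤ n`, and both inequalities are equalities.
-/

theorem Nat.card_subtype_ne_add_one {α : Type*} [Finite α] (a : α) :
    Nat.card {x : α // x ≠ a} + 1 = Nat.card α := by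
  rw [add_comm, ← Set.ncard_singleton a]
  exact Set.ncard_add_ncard_compl {a}

namespace SimpleGraph

section IndepAndMatching

variable {G : SimpleGraph V} {H : SimpleGraph W}

theorem IsIndepSet'.image {S : Set W} (hS : H.IsIndepSet' S) (f : H ↪g G) :
    G.IsIndepSet' (f '' S) := by
  rintro _ ⟨a, ha, rfl⟩ _ ⟨b, hb, rfl⟩ hne hadj
  exact hS ha hb (fun h => hne (congrArg f h)) (f.map_rel_iff.1 hadj)

theorem IsIndepSet'.insert {S : Set V} (hS : G.IsIndepSet' S) {l : V}
    (hl : ∀ w ∈ S, ¬G.Adj l w) : G.IsIndepSet' (insert l S) :=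
  Set.Pairwise.insert hS fun w hw _ => ⟨hl w hw, fun h => hl w hw h.symm⟩

theorem IsMatchingSet.image {M : Set (Sym2 W)} (hM : H.IsMatchingSet M) (f : H ↪g G) :
    G.IsMatchingSet (Sym2.map f '' M) := by
  refine ⟨?_, ?_⟩
  · rintro _ ⟨e, he, rfl⟩
    induction e using Sym2.ind with
    | _ a b => simpa using (hM.1 he)
  · rintro _ ⟨e, he, rfl⟩ _ ⟨e', he', rfl⟩ hne x hx hx'
    obtain ⟨a, ha, rfl⟩ := Sym2.mem_map.1 hx
    obtain ⟨b, hb, hba⟩ := Sym2.mem_map.1 hx'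
    rw [f.injective hba] at hb
    exact hM.2 he he' (fun h => hne (h ▸ rfl)) a ha hb

theorem IsMatchingSet.insert {M : Set (Sym2 V)} (hM : G.IsMatchingSet M) {a b : V}
    (hab : G.Adj a b) (hM_ab : ∀ e ∈ M, a ∉ e ∧ b ∉ e) :
    G.IsMatchingSet (insert s(a, b) M) := by
  refine ⟨Set.insert_subset hab hM.1, hM.2.insert fun e he _ => ?_⟩
  have hdisj : ∀ x ∈ s(a, b), x ∉ e := by simpa using hM_ab e he
  exact ⟨hdisj, fun x hx hx' => hdisj x hx' hx⟩

theorem IsMatchingSet.preimage {M : Set (Sym2 V)} (hM : G.IsMatchingSet M) {f : W → V}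
    (hf : Function.Injective f) (hadj : ∀ a b, G.Adj (f a) (f b) → H.Adj a b) :
    H.IsMatchingSet (Sym2.map f ⁻¹' M) := by
  refine ⟨fun e he => ?_, fun e he e' he' hne x hx hx' => ?_⟩
  · induction e using Sym2.ind with
    | _ a b => exact hadj a b (by simpa using hM.1 he)
  · exact hM.2 he he' (fun h => hne (Sym2.map.injective hf h)) (f x)
      (Sym2.mem_map.2 ⟨x, hx, rfl⟩) (Sym2.mem_map.2 ⟨x, hx', rfl⟩)

end IndepAndMatching

section Numbers

variable [Finite V] (G : SimpleGraph V)

theorem bddAbove_ncard_isIndepSet' :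
    BddAbove {n | ∃ s : Set V, G.IsIndepSet' s ∧ s.ncard = n} :=
  ⟨Nat.card V, by rintro _ ⟨s, -, rfl⟩; exact Set.ncard_le_card s⟩

theorem bddAbove_ncard_isMatchingSet :
    BddAbove {n | ∃ M : Set (Sym2 V), G.IsMatchingSet M ∧ M.ncard = n} :=
  ⟨Nat.card (Sym2 V), by rintro _ ⟨M, -, rfl⟩; exact Set.ncard_le_card M⟩

variable {G}

theorem IsIndepSet'.ncard_le_indepNum' {s : Set V} (hs : G.IsIndepSet' s) :
    s.ncard ≤ G.indepNum' :=
  le_csSup (bddAbove_ncard_isIndepSet' G) ⟨s, hs, rfl⟩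

theorem IsMatchingSet.ncard_le_matchingNum {M : Set (Sym2 V)} (hM : G.IsMatchingSet M) :
    M.ncard ≤ G.matchingNum :=
  le_csSup (bddAbove_ncard_isMatchingSet G) ⟨M, hM, rfl⟩

variable (G)

theorem exists_isIndepSet'_ncard_eq_indepNum' :
    ∃ s : Set V, G.IsIndepSet' s ∧ s.ncard = G.indepNum' :=
  Nat.sSup_mem (s := {n | ∃ s : Set V, G.IsIndepSet' s ∧ s.ncard = n})
    ⟨0, ∅, Set.pairwise_empty _, Set.ncard_empty V⟩ (bddAbove_ncard_isIndepSet' G)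

theorem exists_isMatchingSet_ncard_eq_matchingNum :
    ∃ M : Set (Sym2 V), G.IsMatchingSet M ∧ M.ncard = G.matchingNum :=
  Nat.sSup_mem (s := {n | ∃ M : Set (Sym2 V), G.IsMatchingSet M ∧ M.ncard = n})
    ⟨0, ∅, ⟨Set.empty_subset _, Set.pairwise_empty _⟩, Set.ncard_empty _⟩
    (bddAbove_ncard_isMatchingSet G)

variable {G}

theorem IsIndepSet'.ncard_add_ncard_le {S : Set V} (hS : G.IsIndepSet' S) {M : Set (Sym2 V)}
    (hM : G.IsMatchingSet M) : S.ncard + M.ncard ≤ Nat.card V := by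
  have hout : ∀ e : Sym2 V, ∃ x ∈ e, e ∈ M → x ∉ S := by
    intro e
    induction e using Sym2.ind with
    | _ a b =>
      by_cases ha : a ∈ S
      · refine ⟨b, Sym2.mem_mk_right a b, fun he hb => ?_⟩
        have hab : G.Adj a b := hM.1 he
        exact hS ha hb hab.ne hab
      · exact ⟨a, Sym2.mem_mk_left a b, fun _ => ha⟩
  choose f hf_mem hf_out using hout
  have hinj : Set.InjOn f M := fun e he e' he' h => by
    by_contra hne
    exact hM.2 he he' hne (f e) (hf_mem e) (h ▸ hf_mem e')
  have := Set.ncard_le_ncard_of_injOn (t := Sᶜ) f hf_out hinj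
  have := Set.ncard_add_ncard_compl S
  omega

theorem IsIndepSet'.ncard_le_ncard_sdiff_pair_add_one {S : Set V} (hS : G.IsIndepSet' S) {a b : V}
    (hab : G.Adj a b) : S.ncard ≤ (S \ {a, b}).ncard + 1 := by
  rw [← Set.ncard_inter_add_ncard_sdiff_eq_ncard S {a, b}, add_comm]
  refine Nat.add_le_add_left ((Set.ncard_le_one).2 ?_) _
  rintro x ⟨hxS, rfl | rfl⟩ y ⟨hyS, rfl | rfl⟩
  · rfl
  · exact absurd hab (hS hxS hyS hab.ne)
  · exact absurd hab.symm (hS hxS hyS hab.ne')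
  · rfl

variable (G)

theorem indepNum'_add_matchingNum_le : G.indepNum' + G.matchingNum ≤ Nat.card V := by
  obtain ⟨S, hS, hS_card⟩ := G.exists_isIndepSet'_ncard_eq_indepNum'
  obtain ⟨M, hM, hM_card⟩ := G.exists_isMatchingSet_ncard_eq_matchingNum
  rw [← hS_card, ← hM_card]
  exact hS.ncard_add_ncard_le hM

end Numbers

section Forest

theorem IsAcyclic.exists_adj_forall_adj_eq [Finite V] {G : SimpleGraph V} (hG : G.IsAcyclic)
    {a b : V} (hab : G.Adj a b) : ∃ l p, G.Adj l p ∧ ∀ w, G.Adj l w → w = p := by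
  have : Nonempty V := ⟨a⟩
  obtain ⟨l, _, q, hq, hmax⟩ := Walk.exists_isPath_forall_isPath_length_le_length G
  have hq_nil : ¬q.Nil := fun h => by
    have := hmax a b (.cons hab .nil) (by simp [hab.ne])
    simp [Walk.length_eq_zero_iff.2 h] at this
  refine ⟨l, q.snd, q.adj_snd hq_nil, fun w hw => hG.eq_snd_of_adj_start hq hw ?_⟩
  by_contra hw_q
  have := hmax w _ (.cons hw.symm q) (hq.cons hw_q)
  simp at this

theorem IsAcyclic.exists_isIndepSet'_isMatchingSet_ncard_add_ncard_eq [Finite V]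
    {G : SimpleGraph V} (hG : G.IsAcyclic) : ∃ (S : Set V) (M : Set (Sym2 V)),
      G.IsIndepSet' S ∧ G.IsMatchingSet M ∧ S.ncard + M.ncard = Nat.card V := by
  induction hn : Nat.card V using Nat.strong_induction_on generalizing V with
  | _ n ih =>
  by_cases hE : ∃ a b, G.Adj a b
  swap
  · push Not at hE
    exact ⟨Set.univ, ∅, fun a _ b _ _ => hE a b, ⟨Set.empty_subset _, Set.pairwise_empty _⟩,
      by simp [hn]⟩
  obtain ⟨a, b, hab⟩ := hE
  obtain ⟨l, p, hlp, hl⟩ := hG.exists_adj_forall_adj_eq hab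
  set s : Set V := {l, p}ᶜ
  set f := Embedding.induce (G := G) s
  have hcard : Nat.card s + 2 = n := by
    rw [← hn, ← Set.ncard_pair hlp.ne, Nat.card_coe_set_eq, add_comm]
    exact Set.ncard_add_ncard_compl _
  obtain ⟨S, M, hS, hM, hSM⟩ := ih _ (by omega) (hG.induce s) rfl
  have hf : ∀ x, f x ≠ l ∧ f x ≠ p := fun x => not_or.1 x.2
  have hl_S : l ∉ f '' S := fun ⟨x, _, hx⟩ => (hf x).1 hx
  have hlp_M : s(l, p) ∉ Sym2.map f '' M := fun ⟨e, _, he⟩ => by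
    obtain ⟨x, -, hx⟩ := Sym2.mem_map.1 (he ▸ Sym2.mem_mk_left l p : l ∈ Sym2.map f e)
    exact (hf x).1 hx
  refine ⟨insert l (f '' S), insert s(l, p) (Sym2.map f '' M), ?_, ?_, ?_⟩
  · refine (hS.image f).insert fun w ⟨x, _, hx⟩ hlw => (hf x).2 ?_
    rw [hx, hl w hlw]
  · refine (hM.image f).insert hlp fun e ⟨e', _, he⟩ => ⟨fun h => ?_, fun h => ?_⟩ <;>
      obtain ⟨x, -, hx⟩ := Sym2.mem_map.1 (he ▸ h)
    exacts [(hf x).1 hx, (hf x).2 hx]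
  · rw [Set.ncard_insert_of_notMem hl_S, Set.ncard_insert_of_notMem hlp_M,
      Set.ncard_image_of_injective _ f.injective,
      Set.ncard_image_of_injective _ (Sym2.map.injective f.injective)]
    omega

theorem IsAcyclic.card_le_indepNum'_add_matchingNum [Finite V] {G : SimpleGraph V}
    (hG : G.IsAcyclic) : Nat.card V ≤ G.indepNum' + G.matchingNum := by
  obtain ⟨S, M, hS, hM, hSM⟩ := hG.exists_isIndepSet'_isMatchingSet_ncard_add_ncard_eq
  have := hS.ncard_le_indepNum'
  have := hM.ncard_le_matchingNum
  omega

end Forest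

section Contraction

variable {T : SimpleGraph V} {u v : V}

open Classical in
noncomputable def contractEdgeMap (hvu : v ≠ u) (x : V) : {x : V // x ≠ u} :=
  if h : x = u then ⟨v, hvu⟩ else ⟨x, h⟩

@[simp]
theorem contractEdgeMap_self (hvu : v ≠ u) : contractEdgeMap hvu u = ⟨v, hvu⟩ :=
  dif_pos rfl

@[simp]
theorem contractEdgeMap_coe (hvu : v ≠ u) (x : {x : V // x ≠ u}) : contractEdgeMap hvu x = x :=
  dif_neg x.2

theorem contractEdge_adj_of_adj {x y : {x : V // x ≠ u}} (h : T.Adj x y) :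
    (T.contractEdge u v).Adj x y :=
  ⟨fun hxy => h.ne (congrArg Subtype.val hxy), Or.inl h⟩

theorem Adj.reachable_contractEdgeMap (hvu : v ≠ u) {a b : V} (h : T.Adj a b) :
    (T.contractEdge u v).Reachable (contractEdgeMap hvu a) (contractEdgeMap hvu b) := by
  by_cases hφ : contractEdgeMap hvu a = contractEdgeMap hvu b
  · rw [hφ]
  refine Adj.reachable ⟨hφ, ?_⟩
  unfold contractEdgeMap at hφ ⊢
  split_ifs at hφ ⊢ <;> simp_all [adj_comm]

theorem Connected.contractEdge (hT : T.Connected) (hvu : v ≠ u) :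
    (T.contractEdge u v).Connected := by
  have : Nonempty {x : V // x ≠ u} := ⟨⟨v, hvu⟩⟩
  have hlift : ∀ a b, T.Reachable a b →
      (T.contractEdge u v).Reachable (contractEdgeMap hvu a) (contractEdgeMap hvu b) := by
    simp_rw [reachable_iff_reflTransGen]
    exact Relation.ReflTransGen.lift' _ fun a b h =>
      (reachable_iff_reflTransGen _ _).1 (h.reachable_contractEdgeMap hvu)
  exact Connected.mk fun x y => by simpa using hlift x y (hT.preconnected x y)

theorem edgeSet_contractEdge_subset (hvu : v ≠ u) :
    (T.contractEdge u v).edgeSet ⊆ Sym2.map (contractEdgeMap hvu) '' (T.edgeSet \ {s(u, v)}) := by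
  intro e he
  induction e using Sym2.ind with
  | _ x y =>
  obtain ⟨hxy, hadj | ⟨hx, hadj⟩ | ⟨hy, hadj⟩⟩ := he <;> dsimp only at *
  · refine ⟨s(x, y), ⟨hadj, ?_⟩, by simp⟩
    simp [x.2, y.2]
  · have hyv : (y : V) ≠ v := fun h => hxy (Subtype.ext (hx.trans h.symm))
    refine ⟨s(u, y), ⟨hadj, ?_⟩, ?_⟩
    · simp [hyv, y.2]
    · simp [Subtype.ext_iff, hx]
  · have hxv : (x : V) ≠ v := fun h => hxy (Subtype.ext (h.trans hy.symm))
    refine ⟨s(x, u), ⟨hadj.symm, ?_⟩, ?_⟩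
    · simp [hxv, x.2]
    · simp [Subtype.ext_iff, hy]

theorem IsTree.contractEdge [Finite V] (hT : T.IsTree) (huv : T.Adj u v) :
    (T.contractEdge u v).IsTree := by
  have hC := hT.connected.contractEdge huv.ne'
  rw [isTree_iff_connected_and_card]
  refine ⟨hC, le_antisymm ?_ hC.card_vert_le_card_edgeSet_add_one⟩
  have hT_card := (isTree_iff_connected_and_card.1 hT).2
  have hC_edges : Nat.card (T.contractEdge u v).edgeSet ≤ (T.edgeSet \ {s(u, v)}).ncard :=
    (Set.ncard_le_ncard (edgeSet_contractEdge_subset huv.ne')).trans Set.ncard_image_le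
  have hT_edges := Set.ncard_sdiff_singleton_add_one (show s(u, v) ∈ T.edgeSet from huv)
  have := Nat.card_subtype_ne_add_one u
  rw [Nat.card_coe_set_eq] at hT_card
  omega

theorem indepNum'_le_indepNum'_contractEdge_add_one [Finite V] (huv : T.Adj u v) :
    T.indepNum' ≤ (T.contractEdge u v).indepNum' + 1 := by
  obtain ⟨I, hI, hI_card⟩ := T.exists_isIndepSet'_ncard_eq_indepNum'
  have hI' : (T.contractEdge u v).IsIndepSet' (Subtype.val ⁻¹' (I \ {u, v})) := by
    rintro x ⟨hx, hx'⟩ y ⟨hy, hy'⟩ hxy ⟨-, hadj | ⟨hxv, -⟩ | ⟨hyv, -⟩⟩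
    · exact hI hx hy (Subtype.coe_ne_coe.2 hxy) hadj
    · exact hx' (Or.inr hxv)
    · exact hy' (Or.inr hyv)
  have hI'_card :
      (Subtype.val ⁻¹' (I \ {u, v}) : Set {x : V // x ≠ u}).ncard = (I \ {u, v}).ncard :=
    Set.ncard_preimage_of_injective_subset_range Subtype.val_injective
      fun x hx => ⟨⟨x, fun h => hx.2 (Or.inl h)⟩, rfl⟩
  have := hI.ncard_le_ncard_sdiff_pair_add_one huv
  have := hI'.ncard_le_indepNum'
  omega

theorem IsMatchingSet.ncard_le_matchingNum_contractEdge [Finite V] {M : Set (Sym2 V)}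
    (hM : T.IsMatchingSet M) (hu : ∀ e ∈ M, u ∉ e) :
    M.ncard ≤ (T.contractEdge u v).matchingNum := by
  have hM' : (T.contractEdge u v).IsMatchingSet (Sym2.map Subtype.val ⁻¹' M) :=
    hM.preimage Subtype.val_injective fun _ _ => contractEdge_adj_of_adj
  have hM_range : M ⊆ Set.range (Sym2.map ((↑) : {x : V // x ≠ u} → V)) := by
    intro e he
    induction e using Sym2.ind with
    | _ a b =>
      have hau : a ≠ u := fun h => hu _ he (h ▸ Sym2.mem_mk_left a b)
      have hbu : b ≠ u := fun h => hu _ he (h ▸ Sym2.mem_mk_right a b)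
      exact ⟨s(⟨a, hau⟩, ⟨b, hbu⟩), rfl⟩
  rw [← Set.ncard_preimage_of_injective_subset_range (Sym2.map.injective Subtype.val_injective)
    hM_range]
  exact hM'.ncard_le_matchingNum

end Contraction

end SimpleGraph

/-- Contracting an edge `uv` of a tree `T`, where `u` is unsaturated by a maximum
matching `M`, yields a tree with the same matching number and with independence number one
less. -/
theorem stmt12 {V : Type*} [Fintype V] (T : SimpleGraph V) (hT : T.IsTree)
    (M : Set (Sym2 V)) (hM : T.IsMatchingSet M) (hMmax : M.ncard = T.matchingNum)
    (u v : V) (huv : T.Adj u v) (hunsat : ∀ e ∈ M, u ∉ e) :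
    (T.contractEdge u v).IsTree ∧
      (T.contractEdge u v).matchingNum = T.matchingNum ∧
      (T.contractEdge u v).indepNum' = T.indepNum' - 1 := by
  have hT_sum := hT.isAcyclic.card_le_indepNum'_add_matchingNum
  have hC_sum := (T.contractEdge u v).indepNum'_add_matchingNum_le
  have h_indep := indepNum'_le_indepNum'_contractEdge_add_one huv
  have h_matching := hM.ncard_le_matchingNum_contractEdge (v := v) hunsat
  have h_card := Nat.card_subtype_ne_add_one u
  exact ⟨hT.contractEdge huv, by omega, by omega⟩
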